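/- arXiv:1005.5355 — 7 statements merged into one kernel-verified Lean document; each statement's English description precedes it below -/
import Mathlib

section
/- Let dim V = 3. A linear bivector P on V* is Poisson (i.e., its Schouten bracket [P,P] vanishes) if and only if the dual 1-form α (determined by P(f,g)·v = df ∧ dg ∧ α, where v is the standard volume form) satisfies α ∧ dα = 0. -/
open MvPolynomial

noncomputable section

/-- Levi-Civita symbol on Fin 3 with values in F. -/
def eps {F : Type*} [Field F] (h i j : Fin 3) : F :=
  if (i, j) = (h + 1, h + 2) then 1 else if (i, j) = (h + 2, h + 1) then -1 else 0

/-- The linear bivector P^c = Σ c_h^k ε_h^{ij} x_k ∂_i∧∂_j on F³ associated with the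
3×3 matrix m = (c_h^k): its (i,j) component. -/
def biv {F : Type*} [Field F] (m : Matrix (Fin 3) (Fin 3) F) :
    Fin 3 → Fin 3 → MvPolynomial (Fin 3) F :=
  fun i j => ∑ h, ∑ k, C (eps h i j * m h k) * X k

/-- The (unique, top) component of the Schouten bracket [P,Q] of two bivector fields
on F³ (a trivector field = a function times ∂₁∧∂₂∧∂₃), in coordinates. -/
def sch3 {F : Type*} [Field F] (P Q : Fin 3 → Fin 3 → MvPolynomial (Fin 3) F) :
    MvPolynomial (Fin 3) F :=
  ∑ l, (P l 0 * pderiv l (Q 1 2) + P l 1 * pderiv l (Q 2 0) + P l 2 * pderiv l (Q 0 1)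
      + Q l 0 * pderiv l (P 1 2) + Q l 1 * pderiv l (P 2 0) + Q l 2 * pderiv l (P 0 1))

/-- The dual linear 1-form α = Σ c_h^k x_k dx_h (determined by P(f,g)·vol = df∧dg∧α):
its dx_h-component. -/
def formOf {F : Type*} [Field F] (m : Matrix (Fin 3) (Fin 3) F) :
    Fin 3 → MvPolynomial (Fin 3) F :=
  fun h => ∑ k, C (m h k) * X k

/-- Coefficient of the volume form in ω ∧ dη. -/
def wedgeD {F : Type*} [Field F] (ω η : Fin 3 → MvPolynomial (Fin 3) F) :
    MvPolynomial (Fin 3) F :=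
  ω 0 * (pderiv 1 (η 2) - pderiv 2 (η 1))
    + ω 1 * (pderiv 2 (η 0) - pderiv 0 (η 2))
    + ω 2 * (pderiv 0 (η 1) - pderiv 1 (η 0))

set_option maxHeartbeats 2000000 in
theorem sch3_eq_two_wedgeD {F : Type*} [Field F] (m : Matrix (Fin 3) (Fin 3) F) :
    sch3 (biv m) (biv m) = C 2 * wedgeD (formOf m) (formOf m) := by
  simp [sch3, biv, formOf, wedgeD, eps, Fin.sum_univ_three, pderiv_X, pderiv_C_mul,
    Pi.single_apply, map_add, map_ofNat]
  ring

/-- for dim V = 3, a linear bivector P on V* is Poisson ([P,P] = 0) iff its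
dual 1-form α (with respect to the standard volume form) satisfies α ∧ dα = 0. -/
theorem stmt4 {F : Type*} [Field F] (hchar : (2 : F) ≠ 0)
    (m : Matrix (Fin 3) (Fin 3) F) :
    sch3 (biv m) (biv m) = 0 ↔ wedgeD (formOf m) (formOf m) = 0 := by
  rw [sch3_eq_two_wedgeD, mul_eq_zero]
  simp [MvPolynomial.C_eq_zero, hchar]

end
end

section
/- For dim V = 3, if the bilinear form q_c on V* associated to the linear 1-form α_c is either symmetric or skew-symmetric, then the structure constants c define a Lie algebra structure on V. -/
noncomputable section

set_option maxHeartbeats 1000000 in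
/-- For dim V = 3 (char F ≠ 2), a candidate structure c = (c_h^k), i.e.
structure constants c_{ij}^k = Σ_h ε_h^{ij} c_h^k, whose associated bilinear form q_c
on V* (the matrix (c_h^k)) is either symmetric or skew-symmetric, defines a Lie
algebra structure on V: the structure constants are skew in the lower indices and
satisfy the Jacobi identity. -/
theorem stmt5 {F : Type*} [Field F] (hchar : (2 : F) ≠ 0)
    (q : Matrix (Fin 3) (Fin 3) F) (hq : q.transpose = q ∨ q.transpose = -q)
    (c : Fin 3 → Fin 3 → Fin 3 → F)
    (hc : ∀ i j k, c i j k = ∑ h, eps h i j * q h k) :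
    (∀ i j k, c i j k = - c j i k) ∧
      (∀ a b d k, ∑ j, (c a j k * c b d j + c d j k * c a b j + c b j k * c d a j) = 0) := by
  have c00 : ∀ k, c 0 0 k = 0 := fun k => by
    rw [hc]; simp (config := { decide := true }) [eps, Fin.sum_univ_three]
  have c11 : ∀ k, c 1 1 k = 0 := fun k => by
    rw [hc]; simp (config := { decide := true }) [eps, Fin.sum_univ_three]
  have c22 : ∀ k, c 2 2 k = 0 := fun k => by
    rw [hc]; simp (config := { decide := true }) [eps, Fin.sum_univ_three]
  have c01 : ∀ k, c 0 1 k = q 2 k := fun k => by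
    rw [hc]; simp (config := { decide := true }) [eps, Fin.sum_univ_three]
  have c10 : ∀ k, c 1 0 k = -q 2 k := fun k => by
    rw [hc]; simp (config := { decide := true }) [eps, Fin.sum_univ_three]
  have c12 : ∀ k, c 1 2 k = q 0 k := fun k => by
    rw [hc]; simp (config := { decide := true }) [eps, Fin.sum_univ_three]
  have c21 : ∀ k, c 2 1 k = -q 0 k := fun k => by
    rw [hc]; simp (config := { decide := true }) [eps, Fin.sum_univ_three]
  have c20 : ∀ k, c 2 0 k = q 1 k := fun k => by
    rw [hc]; simp (config := { decide := true }) [eps, Fin.sum_univ_three]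
  have c02 : ∀ k, c 0 2 k = -q 1 k := fun k => by
    rw [hc]; simp (config := { decide := true }) [eps, Fin.sum_univ_three]
  have f0 : (⟨0, by norm_num⟩ : Fin 3) = 0 := rfl
  have f1 : (⟨1, by norm_num⟩ : Fin 3) = 1 := rfl
  have f2 : (⟨2, by norm_num⟩ : Fin 3) = 2 := rfl
  constructor
  · intro i j k
    fin_cases i <;> fin_cases j <;>
      simp only [f0, f1, f2, Fin.isValue, c00, c01, c02, c10, c11, c12, c20, c21, c22] <;> ring
  · intro a b d k
    rw [Fin.sum_univ_three]
    rcases hq with h | h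
    · have e : ∀ i j : Fin 3, q j i = q i j := fun i j => by
        have := congrFun (congrFun h i) j; simpa [Matrix.transpose] using this
      have h10 : q 1 0 = q 0 1 := e 0 1
      have h20 : q 2 0 = q 0 2 := e 0 2
      have h21 : q 2 1 = q 1 2 := e 1 2
      fin_cases a <;> fin_cases b <;> fin_cases d <;>
        simp only [f0, f1, f2, Fin.isValue, c00, c01, c02, c10, c11, c12, c20, c21, c22, h10, h20, h21] <;>
        ring
    · have e : ∀ i j : Fin 3, q j i = - q i j := fun i j => by
        have := congrFun (congrFun h i) j; simpa [Matrix.transpose] using this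
      have h10 : q 1 0 = -q 0 1 := e 0 1
      have h20 : q 2 0 = -q 0 2 := e 0 2
      have h21 : q 2 1 = -q 1 2 := e 1 2
      have d0 : q 0 0 = 0 := by
        have t : (2:F) * q 0 0 = 0 := by linear_combination e 0 0
        exact (mul_eq_zero.mp t).resolve_left hchar
      have d1 : q 1 1 = 0 := by
        have t : (2:F) * q 1 1 = 0 := by linear_combination e 1 1
        exact (mul_eq_zero.mp t).resolve_left hchar
      have d2 : q 2 2 = 0 := by
        have t : (2:F) * q 2 2 = 0 := by linear_combination e 2 2
        exact (mul_eq_zero.mp t).resolve_left hchar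
      fin_cases a <;> fin_cases b <;> fin_cases d <;> fin_cases k <;>
        simp only [f0, f1, f2, Fin.isValue, c00, c01, c02, c10, c11, c12, c20, c21, c22,
          h10, h20, h21, d0, d1, d2] <;>
        ring

end
end

section
/- Let dim V = 3, F = ½ d(x_i²) (i.e., F = ½ x_i²) and α_j = ε_j^{i₁i₂} x_{i₁} dx_{i₂} the basic purely non-unimodular 1-forms. Then the Schouten bracket of the corresponding Lie structures satisfies [c_{½d(x_i²)}, c_{α_j}] = 0 if j ≠ i and equals 2 x_j·ξ (a multiple of the top multivector) if j = i. -/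
open MvPolynomial

noncomputable section

/-- Matrix of the purely non-unimodular 1-form Σ_j a_j α_j, α_j = ε_j^{kh} x_k dx_h. -/
def skewMat {F : Type*} [Field F] (a : Fin 3 → F) : Matrix (Fin 3) (Fin 3) F :=
  Matrix.of fun h k => ∑ j, a j * eps j k h

set_option maxHeartbeats 4000000 in
/-- [c_{½d(x_i²)}, c_{α_j}] = 0 if j ≠ i, and = 2 x_j · ξ if j = i, where
c_{½d(x_i²)} is the unimodular Lie structure with 1-form x_i dx_i (matrix E_{ii}) and
c_{α_j} the purely non-unimodular structure of α_j. -/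
theorem stmt8 {F : Type*} [Field F] (hchar : (2 : F) ≠ 0) (i j : Fin 3) :
    sch3 (biv (Matrix.single i i (1 : F))) (biv (skewMat (Pi.single j (1 : F))))
      = if j = i then (2 : MvPolynomial (Fin 3) F) * X j else 0 := by
  fin_cases i <;> fin_cases j <;>
    simp (config := { decide := true }) only [sch3, biv, skewMat, eps, Matrix.single,
      Pi.single, Function.update, Matrix.of_apply, Fin.sum_univ_three, Prod.mk.injEq,
      if_true, if_false] <;>
    simp [pderiv_X, Pi.single_apply] <;> ring

end
end

section
/- Let dim V = 3 and F = ½(λ x₁² + μ x₂² + ν x₃²). The space Z_N²(dF) of skew-symmetric (purely non-unimodular) linear 1-forms α = aα₁ + bα₂ + cα₃ compatible with dF (i.e., dF ∧ α = 0) has codimension in N equal to the number of nonzero entries among λ, μ, ν; explicitly dF ∧ α = 0 iff λa = μb = νc = 0. Hence codim Z_N²(dF) = rank(dF). -/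
open MvPolynomial

noncomputable section

section Aux

variable {F : Type*} [Field F]

lemma eps_apply (h i j : Fin 3) :
    (eps h i j : F) = ![![![0,0,0],![0,0,1],![0,-1,0]],
      ![![0,0,-1],![0,0,0],![1,0,0]],
      ![![0,1,0],![-1,0,0],![0,0,0]]] h i j := by
  fin_cases h <;> fin_cases i <;> fin_cases j <;> simp [eps] <;> rfl

lemma biv_apply (m : Matrix (Fin 3) (Fin 3) F) (i j : Fin 3) :
    biv m i j = ∑ h, ∑ k, C (eps h i j * m h k) * X k := rfl

lemma skewMat_apply (a : Fin 3 → F) (h k : Fin 3) :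
    skewMat a h k = ∑ j, a j * eps j k h := rfl

lemma skew_entries (a b c : F) (h k : Fin 3) :
    skewMat ![a,b,c] h k = ![![0, -c, b], ![c, 0, -a], ![-b, a, 0]] h k := by
  fin_cases h <;> fin_cases k <;>
    simp [skewMat_apply, Fin.sum_univ_three, eps_apply, Matrix.vecHead, Matrix.vecTail]

lemma bivD (l m n : F) (i j : Fin 3) :
    biv (Matrix.diagonal ![l, m, n]) i j
      = ![![0, C n * X 2, -(C m * X 1)], ![-(C n * X 2), 0, C l * X 0],
          ![C m * X 1, -(C l * X 0), 0]] i j := by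
  fin_cases i <;> fin_cases j <;>
    simp [biv_apply, Fin.sum_univ_three, eps_apply, Matrix.diagonal,
      Matrix.vecHead, Matrix.vecTail]

lemma bivS (a b c : F) (i j : Fin 3) :
    biv (skewMat ![a,b,c]) i j
      = ![![0, -(C b * X 0) + C a * X 1, -(C c * X 0) + C a * X 2],
          ![C b * X 0 - C a * X 1, 0, -(C c * X 1) + C b * X 2],
          ![C c * X 0 - C a * X 2, C c * X 1 - C b * X 2, 0]] i j := by
  have hs := skew_entries a b c
  fin_cases i <;> fin_cases j <;>
    simp [biv_apply, Fin.sum_univ_three, eps_apply, hs, Matrix.vecHead, Matrix.vecTail, sub_eq_add_neg]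

lemma key (l m n a b c : F) :
    sch3 (biv (Matrix.diagonal ![l, m, n])) (biv (skewMat ![a, b, c]))
      = C (2 * (l * a)) * X 0 + C (2 * (m * b)) * X 1 + C (2 * (n * c)) * X 2 := by
  simp only [sch3, bivD, bivS, Fin.sum_univ_three]
  simp [pderiv_X, C_mul, map_ofNat]
  ring

end Aux

/-- with F = ½(λx₁² + μx₂² + νx₃²) (so dF has matrix diag(λ,μ,ν)),
a purely non-unimodular form α = aα₁ + bα₂ + cα₃ is compatible with dF
(i.e. [c_F, c_α] = 0) iff λa = μb = νc = 0; hence the space Z_N²(dF) of such α has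
dimension 3 − rank(dF), i.e. codimension rank(dF) in N. -/
theorem stmt9 {F : Type*} [Field F] (hchar : (2 : F) ≠ 0) (l m n : F) :
    (∀ a b c : F,
        sch3 (biv (Matrix.diagonal ![l, m, n])) (biv (skewMat ![a, b, c])) = 0
          ↔ (l * a = 0 ∧ m * b = 0 ∧ n * c = 0)) ∧
    Module.finrank F (LinearMap.ker (Matrix.diagonal ![l, m, n]).mulVecLin)
      = 3 - (Matrix.diagonal ![l, m, n]).rank := by
  constructor
  · intro a b c
    rw [key]
    constructor
    · intro h
      have h0 := congrArg (eval (Pi.single (0:Fin 3) (1:F))) h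
      have h1 := congrArg (eval (Pi.single (1:Fin 3) (1:F))) h
      have h2 := congrArg (eval (Pi.single (2:Fin 3) (1:F))) h
      simp only [map_add, map_mul, eval_C, eval_X, map_zero, Pi.single_apply,
        Fin.reduceEq, if_true, if_false, ite_true, ite_false, reduceIte,
        mul_one, mul_zero, add_zero, zero_add, mul_eq_zero] at h0 h1 h2
      refine ⟨?_, ?_, ?_⟩ <;>
        [rcases h0 with h | h | h; rcases h1 with h | h | h; rcases h2 with h | h | h] <;>
        first | exact absurd h hchar | simp [h]
    · rintro ⟨h1, h2, h3⟩
      simp [h1, h2, h3]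
  · have := LinearMap.finrank_range_add_finrank_ker
      (Matrix.diagonal ![l, m, n]).mulVecLin
    have hr : (Matrix.diagonal ![l, m, n]).rank
        = Module.finrank F (LinearMap.range (Matrix.diagonal ![l, m, n]).mulVecLin) := rfl
    rw [Module.finrank_fin_fun] at this
    omega

end
end

section
/- Let dim V = 3, F a nondegenerate quadratic form (rank dF = 3). Then a linear 1-form β = dG + α (G quadratic, α ∈ N) satisfies β ∧ dβ = 0 and is compatible with dF if and only if α = 0; equivalently the compatibility variety Lie(V, c_F) equals the space Lie₀(V) of unimodular structures. -/
open MvPolynomial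

noncomputable section

lemma pderiv_formOf {F : Type*} [Field F] (m : Matrix (Fin 3) (Fin 3) F) (i h : Fin 3) :
    pderiv i (formOf m h) = C (m h i) := by
  fin_cases i <;> simp [formOf, Fin.sum_univ_three]

lemma eval_formOf {F : Type*} [Field F] (m : Matrix (Fin 3) (Fin 3) F) (k h : Fin 3) :
    eval (Pi.single k (1:F)) (formOf m h) = m h k := by
  fin_cases k <;> simp [formOf, Fin.sum_univ_three, Pi.single_apply]

lemma wedgeD_formOf {F : Type*} [Field F] (m n : Matrix (Fin 3) (Fin 3) F) :
    wedgeD (formOf m) (formOf n)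
      = formOf m 0 * (C (n 2 1) - C (n 1 2)) + formOf m 1 * (C (n 0 2) - C (n 2 0))
        + formOf m 2 * (C (n 1 0) - C (n 0 1)) := by
  simp [wedgeD, pderiv_formOf]

lemma eval_wedgeD_formOf {F : Type*} [Field F] (m n : Matrix (Fin 3) (Fin 3) F) (k : Fin 3) :
    eval (Pi.single k (1:F)) (wedgeD (formOf m) (formOf n))
      = m 0 k * (n 2 1 - n 1 2) + m 1 k * (n 0 2 - n 2 0) + m 2 k * (n 1 0 - n 0 1) := by
  simp [wedgeD_formOf, eval_formOf]

lemma sk21 {F : Type*} [Field F] (a : Fin 3 → F) : skewMat a 2 1 = a 0 := by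
  simp [skewMat, eps, Fin.sum_univ_three]
lemma sk12 {F : Type*} [Field F] (a : Fin 3 → F) : skewMat a 1 2 = -a 0 := by
  simp [skewMat, eps, Fin.sum_univ_three]
lemma sk02 {F : Type*} [Field F] (a : Fin 3 → F) : skewMat a 0 2 = a 1 := by
  simp [skewMat, eps, Fin.sum_univ_three]
lemma sk20 {F : Type*} [Field F] (a : Fin 3 → F) : skewMat a 2 0 = -a 1 := by
  simp [skewMat, eps, Fin.sum_univ_three]
lemma sk10 {F : Type*} [Field F] (a : Fin 3 → F) : skewMat a 1 0 = a 2 := by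
  simp [skewMat, eps, Fin.sum_univ_three]
lemma sk01 {F : Type*} [Field F] (a : Fin 3 → F) : skewMat a 0 1 = -a 2 := by
  simp [skewMat, eps, Fin.sum_univ_three]


/-- let dF be nondegenerate (rank 3, i.e. the symmetric matrix S is
invertible). A linear 1-form β = dG + α (G quadratic i.e. symmetric matrix, α purely
non-unimodular) is a Lie structure (β ∧ dβ = 0) compatible with c_F (vanishing of
the cross Schouten term β∧d(dF) + dF∧dβ) iff α = 0; i.e. Lie(V, c_F) = Lie₀(V). -/
theorem stmt10 {F : Type*} [Field F] (hchar : (2 : F) ≠ 0)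
    (S : Matrix (Fin 3) (Fin 3) F) (hS : S.IsSymm) (hdet : IsUnit S.det) :
    ∀ (G : Matrix (Fin 3) (Fin 3) F) (a : Fin 3 → F), G.IsSymm →
      ((wedgeD (formOf (G + skewMat a)) (formOf (G + skewMat a)) = 0 ∧
          wedgeD (formOf S) (formOf (G + skewMat a))
            + wedgeD (formOf (G + skewMat a)) (formOf S) = 0)
        ↔ a = 0) := by
  intro G a hG
  have hS10 := hS.apply 0 1
  have hS20 := hS.apply 0 2
  have hS21 := hS.apply 1 2
  have hG10 := hG.apply 0 1
  have hG20 := hG.apply 0 2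
  have hG21 := hG.apply 1 2
  constructor
  · rintro ⟨-, h2⟩
    have e : ∀ k : Fin 3, 2 * a 0 * S 0 k + 2 * a 1 * S 1 k + 2 * a 2 * S 2 k = 0 := by
      intro k
      have h := congrArg (eval (Pi.single k (1:F))) h2
      rw [map_add, eval_wedgeD_formOf, eval_wedgeD_formOf, map_zero] at h
      simp only [Matrix.add_apply, sk21, sk12, sk02, sk20, sk10, sk01] at h
      rw [hS10, hS20, hS21, hG10, hG20, hG21] at h
      linear_combination h
    have hv : S.vecMul (fun i => 2 * a i) = 0 := by
      funext k
      simp only [Matrix.vecMul, dotProduct, Fin.sum_univ_three, Pi.zero_apply]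
      linear_combination e k
    have hinj := Matrix.vecMul_injective_iff_isUnit.mpr ((Matrix.isUnit_iff_isUnit_det S).mpr hdet)
    have hz : (fun i => 2 * a i) = (0 : Fin 3 → F) := by
      apply hinj; simpa using hv
    funext i
    exact (mul_eq_zero.mp (congrFun hz i)).resolve_left hchar
  · rintro rfl
    have hz : skewMat (0 : Fin 3 → F) = 0 := by
      ext h k
      fin_cases h <;> fin_cases k <;> simp [skewMat, eps, Fin.sum_univ_three]
    rw [hz, add_zero]
    constructor
    · rw [wedgeD_formOf, hG10, hG20, hG21]; ring
    · rw [wedgeD_formOf, wedgeD_formOf, hG10, hG20, hG21, hS10, hS20, hS21]; ring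

end
end

section
/- Let dim V = 3 and α₃ = x₁dx₂ − x₂dx₁. The set of exact linear 1-forms dG (G quadratic) compatible with α₃ (i.e., dG ∧ α₃ = 0, equivalently [c_G, c_{α₃}] = 0) is exactly the span of ½d(x₁²), ½d(x₂²), and d(x₁x₂); i.e., Z²(α₃) ∩ Lie₀(V) = s², the symmetric forms in the variables x₁, x₂ only. -/
open MvPolynomial

noncomputable section

/-- for dim V = 3, an exact linear 1-form dG (G a quadratic form,
i.e. a symmetric matrix) is compatible with α₃ = x₁dx₂ − x₂dx₁
(vanishing of the cross Schouten term dG∧dα₃ + α₃∧d(dG)) iff G involves only the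
variables x₁,x₂, i.e. the third row (and column) of G vanishes:
Z²(α₃) ∩ Lie₀(V) = s² = span{½d(x₁²), ½d(x₂²), d(x₁x₂)}. -/
theorem stmt11 {F : Type*} [Field F] (hchar : (2 : F) ≠ 0)
    (G : Matrix (Fin 3) (Fin 3) F) (hG : G.IsSymm) :
    (wedgeD (formOf G) (formOf (skewMat ![0, 0, 1]))
        + wedgeD (formOf (skewMat ![0, 0, 1])) (formOf G) = 0)
      ↔ (∀ k, G 2 k = 0) := by
  have h01 : G 0 1 = G 1 0 := by rw [← hG.apply 1 0]
  have h02 : G 0 2 = G 2 0 := by rw [← hG.apply 2 0]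
  have h12 : G 1 2 = G 2 1 := by rw [← hG.apply 2 1]
  have key : wedgeD (formOf G) (formOf (skewMat ![0, 0, 1]))
        + wedgeD (formOf (skewMat ![0, 0, 1])) (formOf G)
      = C (2 * G 2 0) * X 0 + C (2 * G 2 1) * X 1 + C (2 * G 2 2) * X 2 := by
    have c2 : (C (2:F) : MvPolynomial (Fin 3) F) = 2 := by rw [show (2:F) = 1+1 by norm_num, map_add, C_1]; ring
    simp [wedgeD, formOf, skewMat, eps, Fin.sum_univ_three, h01, h02, h12, c2]
    ring
  rw [key]
  constructor
  · intro h k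
    have hk := fun i => congrArg (coeff (Finsupp.single i 1)) h
    simp only [coeff_add, coeff_C_mul, coeff_X', coeff_zero, Finsupp.single_left_inj] at hk
    fin_cases k
    · have := hk 0; simp [Finsupp.single_left_inj (one_ne_zero)] at this; exact this.resolve_left hchar
    · have := hk 1; simp [Finsupp.single_left_inj (one_ne_zero)] at this; exact this.resolve_left hchar
    · have := hk 2; simp [Finsupp.single_left_inj (one_ne_zero)] at this; exact this.resolve_left hchar
  · intro h
    simp [h 0, h 1, h 2]

end
end

section
/- Let dim V = 3 over ℝ and F = ½(x₁² + λx₂² + μx₃²). An endomorphism φ of V is an infinitesimal symmetry of the Lie structure c_F (i.e., L_{X_φ}(α_{c_F}) = 0) if and only if its matrix has the form with first row (0, −λa, −μb), second row (a, c, e), third row (b, f, d) subject to λc = 0, μd = 0, λe + μf = 0. Consequently dim sym(c_F) = 3, 4, 6 according as rank dF = 3, 2, 1, and dim B²(c_F) = 9 − dim sym(c_F) = 6, 5, 3 respectively. -/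
noncomputable section

set_option linter.unreachableTactic false
set_option linter.unusedTactic false
set_option linter.unnecessarySeqFocus false
set_option maxHeartbeats 1000000

/-- The infinitesimal-symmetry operator for a linear 1-form with coefficient matrix M:
φ ↦ L_{X_φ}(ω_M), which in matrix form is φ ↦ Mφ + φᵀM. -/
def symL (M : Matrix (Fin 3) (Fin 3) ℝ) :
    Matrix (Fin 3) (Fin 3) ℝ →ₗ[ℝ] Matrix (Fin 3) (Fin 3) ℝ where
  toFun φ := M * φ + φ.transpose * M
  map_add' x y := by
    simp [Matrix.mul_add, Matrix.add_mul, Matrix.transpose_add]; abel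
  map_smul' r x := by
    simp [Matrix.mul_smul, Matrix.smul_mul, Matrix.transpose_smul]

@[simp]
lemma cons_val_five {α : Type*} {m : ℕ} (x : α) (u : Fin (m + 5) → α) :
    Matrix.vecCons x u 5 =
      Matrix.vecHead (Matrix.vecTail (Matrix.vecTail (Matrix.vecTail (Matrix.vecTail u)))) :=
  rfl

lemma ker_iff (lam mu : ℝ) (φ : Matrix (Fin 3) (Fin 3) ℝ) :
    symL (Matrix.diagonal ![1, lam, mu]) φ = 0 ↔
      (φ 0 0 = 0 ∧ φ 0 1 = -lam * φ 1 0 ∧ φ 0 2 = -mu * φ 2 0 ∧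
       lam * φ 1 1 = 0 ∧ mu * φ 2 2 = 0 ∧ lam * φ 1 2 + mu * φ 2 1 = 0) := by
  constructor
  · intro h
    have e00 := congrFun (congrFun h 0) 0
    have e01 := congrFun (congrFun h 0) 1
    have e02 := congrFun (congrFun h 0) 2
    have e11 := congrFun (congrFun h 1) 1
    have e12 := congrFun (congrFun h 1) 2
    have e22 := congrFun (congrFun h 2) 2
    simp [symL, Matrix.mul_apply, Fin.sum_univ_three, Matrix.diagonal,
      Matrix.transpose_apply] at e00 e01 e02 e11 e12 e22
    exact ⟨by linear_combination e00, by linear_combination e01,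
      by linear_combination e02, by linear_combination e11 / 2,
      by linear_combination e22 / 2, by linear_combination e12⟩
  · rintro ⟨h1, h2, h3, h4, h5, h6⟩
    ext i j
    fin_cases i <;> fin_cases j <;>
      simp [symL, Matrix.mul_apply, Fin.sum_univ_three, Matrix.diagonal,
        Matrix.transpose_apply] <;>
      first
        | linear_combination h1
        | linear_combination h4
        | linear_combination h5
        | linear_combination 2 * h1
        | linear_combination h2
        | linear_combination h3
        | linear_combination 2 * h4
        | linear_combination 2 * h5
        | linear_combination h6

lemma dim1 (lam mu : ℝ) (hl : lam ≠ 0) (hm : mu ≠ 0) :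
    Module.finrank ℝ (LinearMap.ker (symL (Matrix.diagonal ![1, lam, mu]))) = 3 := by
  set B : Fin 3 → Matrix (Fin 3) (Fin 3) ℝ :=
    ![!![0,-lam,0;1,0,0;0,0,0], !![0,0,-mu;0,0,0;1,0,0], !![0,0,0;0,0,mu;0,-lam,0]] with hB
  have hind : LinearIndependent ℝ B := by
    rw [Fintype.linearIndependent_iff]
    intro g hg
    simp only [hB, Fin.sum_univ_three] at hg
    have e10 := congrFun (congrFun hg 1) 0
    have e20 := congrFun (congrFun hg 2) 0
    have e12 := congrFun (congrFun hg 1) 2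
    simp [Matrix.vecHead, Matrix.vecTail] at e10 e20 e12
    intro i
    fin_cases i
    · simpa using e10
    · simpa using e20
    · simp; rcases e12 with h | h
      · exact h
      · exact absurd h hm
  have hspan : LinearMap.ker (symL (Matrix.diagonal ![1, lam, mu]))
      = Submodule.span ℝ (Set.range B) := by
    apply le_antisymm
    · intro φ hφ
      rw [LinearMap.mem_ker, ker_iff] at hφ
      obtain ⟨h1, h2, h3, h4, h5, h6⟩ := hφ
      have p11 : φ 1 1 = 0 := (mul_eq_zero.mp h4).resolve_left hl
      have p22 : φ 2 2 = 0 := (mul_eq_zero.mp h5).resolve_left hm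
      have p21 : φ 2 1 = -(lam * φ 1 2) / mu := by field_simp; linear_combination h6
      have hrep : φ = φ 1 0 • B 0 + φ 2 0 • B 1 + (φ 1 2 / mu) • B 2 := by
        ext i j
        fin_cases i <;> fin_cases j
        all_goals simp [hB, h1, h2, h3, p11, p22, p21, Matrix.vecHead, Matrix.vecTail]
        all_goals try ring
        all_goals try rw [mul_assoc, mul_inv_cancel₀ hm, mul_one]
      rw [hrep]
      exact Submodule.add_mem _ (Submodule.add_mem _
        (Submodule.smul_mem _ _ (Submodule.subset_span ⟨0, rfl⟩))
        (Submodule.smul_mem _ _ (Submodule.subset_span ⟨1, rfl⟩)))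
        (Submodule.smul_mem _ _ (Submodule.subset_span ⟨2, rfl⟩))
    · rw [Submodule.span_le]
      rintro _ ⟨i, rfl⟩
      rw [SetLike.mem_coe, LinearMap.mem_ker, ker_iff]
      fin_cases i <;>
        simp [hB, Matrix.vecHead, Matrix.vecTail] <;> (first | ring | norm_num)
  rw [hspan, finrank_span_eq_card hind, Fintype.card_fin]

lemma dim2 (lam : ℝ) (hl : lam ≠ 0) :
    Module.finrank ℝ (LinearMap.ker (symL (Matrix.diagonal ![1, lam, 0]))) = 4 := by
  set B : Fin 4 → Matrix (Fin 3) (Fin 3) ℝ :=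
    ![!![0,-lam,0;1,0,0;0,0,0], !![0,0,0;0,0,0;1,0,0],
      !![0,0,0;0,0,0;0,1,0], !![0,0,0;0,0,0;0,0,1]] with hB
  have hind : LinearIndependent ℝ B := by
    rw [Fintype.linearIndependent_iff]
    intro g hg
    simp only [hB, Fin.sum_univ_four] at hg
    have e10 := congrFun (congrFun hg 1) 0
    have e20 := congrFun (congrFun hg 2) 0
    have e21 := congrFun (congrFun hg 2) 1
    have e22 := congrFun (congrFun hg 2) 2
    simp [Matrix.vecHead, Matrix.vecTail] at e10 e20 e21 e22
    intro i
    fin_cases i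
    · simpa using e10
    · simpa using e20
    · simpa using e21
    · simpa using e22
  have hspan : LinearMap.ker (symL (Matrix.diagonal ![1, lam, 0]))
      = Submodule.span ℝ (Set.range B) := by
    apply le_antisymm
    · intro φ hφ
      rw [LinearMap.mem_ker, ker_iff] at hφ
      obtain ⟨h1, h2, h3, h4, h5, h6⟩ := hφ
      have p11 : φ 1 1 = 0 := (mul_eq_zero.mp h4).resolve_left hl
      have p12 : φ 1 2 = 0 := by
        have : lam * φ 1 2 = 0 := by linear_combination h6
        exact (mul_eq_zero.mp this).resolve_left hl
      have p02 : φ 0 2 = 0 := by rw [h3]; ring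
      have hrep : φ = φ 1 0 • B 0 + φ 2 0 • B 1 + φ 2 1 • B 2 + φ 2 2 • B 3 := by
        ext i j
        fin_cases i <;> fin_cases j
        all_goals simp [hB, h1, h2, p02, p11, p12, Matrix.vecHead, Matrix.vecTail]
        all_goals try ring
      rw [hrep]
      exact Submodule.add_mem _ (Submodule.add_mem _ (Submodule.add_mem _
        (Submodule.smul_mem _ _ (Submodule.subset_span ⟨0, rfl⟩))
        (Submodule.smul_mem _ _ (Submodule.subset_span ⟨1, rfl⟩)))
        (Submodule.smul_mem _ _ (Submodule.subset_span ⟨2, rfl⟩)))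
        (Submodule.smul_mem _ _ (Submodule.subset_span ⟨3, rfl⟩))
    · rw [Submodule.span_le]
      rintro _ ⟨i, rfl⟩
      rw [SetLike.mem_coe, LinearMap.mem_ker, ker_iff]
      fin_cases i <;>
        simp [hB, Matrix.vecHead, Matrix.vecTail] <;> (first | ring | norm_num)
  rw [hspan, finrank_span_eq_card hind, Fintype.card_fin]

lemma dim3 (mu : ℝ) (hm : mu ≠ 0) :
    Module.finrank ℝ (LinearMap.ker (symL (Matrix.diagonal ![1, 0, mu]))) = 4 := by
  set B : Fin 4 → Matrix (Fin 3) (Fin 3) ℝ :=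
    ![!![0,0,0;1,0,0;0,0,0], !![0,0,0;0,1,0;0,0,0],
      !![0,0,0;0,0,1;0,0,0], !![0,0,-mu;0,0,0;1,0,0]] with hB
  have hind : LinearIndependent ℝ B := by
    rw [Fintype.linearIndependent_iff]
    intro g hg
    simp only [hB, Fin.sum_univ_four] at hg
    have e10 := congrFun (congrFun hg 1) 0
    have e11 := congrFun (congrFun hg 1) 1
    have e12 := congrFun (congrFun hg 1) 2
    have e20 := congrFun (congrFun hg 2) 0
    simp [Matrix.vecHead, Matrix.vecTail] at e10 e11 e12 e20
    intro i
    fin_cases i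
    · simpa using e10
    · simpa using e11
    · simpa using e12
    · simpa using e20
  have hspan : LinearMap.ker (symL (Matrix.diagonal ![1, 0, mu]))
      = Submodule.span ℝ (Set.range B) := by
    apply le_antisymm
    · intro φ hφ
      rw [LinearMap.mem_ker, ker_iff] at hφ
      obtain ⟨h1, h2, h3, h4, h5, h6⟩ := hφ
      have p22 : φ 2 2 = 0 := (mul_eq_zero.mp h5).resolve_left hm
      have p21 : φ 2 1 = 0 := by
        have : mu * φ 2 1 = 0 := by linear_combination h6
        exact (mul_eq_zero.mp this).resolve_left hm
      have p01 : φ 0 1 = 0 := by rw [h2]; ring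
      have hrep : φ = φ 1 0 • B 0 + φ 1 1 • B 1 + φ 1 2 • B 2 + φ 2 0 • B 3 := by
        ext i j
        fin_cases i <;> fin_cases j
        all_goals simp [hB, h1, p01, h3, p22, p21, Matrix.vecHead, Matrix.vecTail]
        all_goals try ring
      rw [hrep]
      exact Submodule.add_mem _ (Submodule.add_mem _ (Submodule.add_mem _
        (Submodule.smul_mem _ _ (Submodule.subset_span ⟨0, rfl⟩))
        (Submodule.smul_mem _ _ (Submodule.subset_span ⟨1, rfl⟩)))
        (Submodule.smul_mem _ _ (Submodule.subset_span ⟨2, rfl⟩)))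
        (Submodule.smul_mem _ _ (Submodule.subset_span ⟨3, rfl⟩))
    · rw [Submodule.span_le]
      rintro _ ⟨i, rfl⟩
      rw [SetLike.mem_coe, LinearMap.mem_ker, ker_iff]
      fin_cases i <;>
        simp [hB, Matrix.vecHead, Matrix.vecTail] <;> (first | ring | norm_num)
  rw [hspan, finrank_span_eq_card hind, Fintype.card_fin]

lemma dim4 :
    Module.finrank ℝ (LinearMap.ker (symL (Matrix.diagonal ![1, 0, 0]))) = 6 := by
  set B : Fin 6 → Matrix (Fin 3) (Fin 3) ℝ :=
    ![!![0,0,0;1,0,0;0,0,0], !![0,0,0;0,1,0;0,0,0], !![0,0,0;0,0,1;0,0,0],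
      !![0,0,0;0,0,0;1,0,0], !![0,0,0;0,0,0;0,1,0], !![0,0,0;0,0,0;0,0,1]] with hB
  have hind : LinearIndependent ℝ B := by
    rw [Fintype.linearIndependent_iff]
    intro g hg
    simp only [hB, Fin.sum_univ_six] at hg
    have e10 := congrFun (congrFun hg 1) 0
    have e11 := congrFun (congrFun hg 1) 1
    have e12 := congrFun (congrFun hg 1) 2
    have e20 := congrFun (congrFun hg 2) 0
    have e21 := congrFun (congrFun hg 2) 1
    have e22 := congrFun (congrFun hg 2) 2
    simp [Matrix.vecHead, Matrix.vecTail] at e10 e11 e12 e20 e21 e22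
    intro i
    fin_cases i
    · simpa using e10
    · simpa using e11
    · simpa using e12
    · simpa using e20
    · simpa using e21
    · simpa using e22
  have hspan : LinearMap.ker (symL (Matrix.diagonal ![1, 0, 0]))
      = Submodule.span ℝ (Set.range B) := by
    apply le_antisymm
    · intro φ hφ
      rw [LinearMap.mem_ker, ker_iff] at hφ
      obtain ⟨h1, h2, h3, h4, h5, h6⟩ := hφ
      have p01 : φ 0 1 = 0 := by rw [h2]; ring
      have p02 : φ 0 2 = 0 := by rw [h3]; ring
      have hrep : φ = φ 1 0 • B 0 + φ 1 1 • B 1 + φ 1 2 • B 2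
          + φ 2 0 • B 3 + φ 2 1 • B 4 + φ 2 2 • B 5 := by
        ext i j
        fin_cases i <;> fin_cases j
        all_goals simp [hB, h1, p01, p02, Matrix.vecHead, Matrix.vecTail]
        all_goals try ring
      rw [hrep]
      exact Submodule.add_mem _ (Submodule.add_mem _ (Submodule.add_mem _
        (Submodule.add_mem _ (Submodule.add_mem _
        (Submodule.smul_mem _ _ (Submodule.subset_span ⟨0, rfl⟩))
        (Submodule.smul_mem _ _ (Submodule.subset_span ⟨1, rfl⟩)))
        (Submodule.smul_mem _ _ (Submodule.subset_span ⟨2, rfl⟩)))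
        (Submodule.smul_mem _ _ (Submodule.subset_span ⟨3, rfl⟩)))
        (Submodule.smul_mem _ _ (Submodule.subset_span ⟨4, rfl⟩)))
        (Submodule.smul_mem _ _ (Submodule.subset_span ⟨5, rfl⟩))
    · rw [Submodule.span_le]
      rintro _ ⟨i, rfl⟩
      rw [SetLike.mem_coe, LinearMap.mem_ker, ker_iff]
      fin_cases i <;>
        simp [hB, Matrix.vecHead, Matrix.vecTail] <;> (first | ring | norm_num)
  rw [hspan, finrank_span_eq_card hind, Fintype.card_fin]

/-- over ℝ, with F = ½(x₁² + λx₂² + μx₃²) (matrix M = diag(1,λ,μ)),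
φ ∈ sym(c_F) (i.e. L_{X_φ}(α_{c_F}) = Mφ + φᵀM = 0) iff φ has the stated shape with
λc = 0, μd = 0, λe + μf = 0; consequently dim sym(c_F) = 3, 4, 6 according as
rank dF = 3, 2, 1, and dim B²(c_F) = 9 − dim sym(c_F) = 6, 5, 3 respectively. -/
theorem stmt14 (lam mu : ℝ) :
    (∀ φ : Matrix (Fin 3) (Fin 3) ℝ,
      symL (Matrix.diagonal ![1, lam, mu]) φ = 0
        ↔ ∃ a b c d e f : ℝ,
            φ = !![0, -lam * a, -mu * b; a, c, e; b, f, d] ∧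
            lam * c = 0 ∧ mu * d = 0 ∧ lam * e + mu * f = 0) ∧
    (lam ≠ 0 → mu ≠ 0 →
      Module.finrank ℝ (LinearMap.ker (symL (Matrix.diagonal ![1, lam, mu]))) = 3 ∧
      9 - Module.finrank ℝ (LinearMap.ker (symL (Matrix.diagonal ![1, lam, mu]))) = 6) ∧
    ((lam ≠ 0 ∧ mu = 0) ∨ (lam = 0 ∧ mu ≠ 0) →
      Module.finrank ℝ (LinearMap.ker (symL (Matrix.diagonal ![1, lam, mu]))) = 4 ∧
      9 - Module.finrank ℝ (LinearMap.ker (symL (Matrix.diagonal ![1, lam, mu]))) = 5) ∧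
    (lam = 0 → mu = 0 →
      Module.finrank ℝ (LinearMap.ker (symL (Matrix.diagonal ![1, lam, mu]))) = 6 ∧
      9 - Module.finrank ℝ (LinearMap.ker (symL (Matrix.diagonal ![1, lam, mu]))) = 3) := by
  refine ⟨?_, ?_, ?_, ?_⟩
  · intro φ
    rw [ker_iff]
    constructor
    · rintro ⟨h1, h2, h3, h4, h5, h6⟩
      refine ⟨φ 1 0, φ 2 0, φ 1 1, φ 2 2, φ 1 2, φ 2 1, ?_, h4, h5, h6⟩
      ext i j
      fin_cases i <;> fin_cases j <;>
        simp [h1, h2, h3, Matrix.vecHead, Matrix.vecTail]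
    · rintro ⟨a, b, c, d, e, f, rfl, hc, hd, hef⟩
      refine ⟨?_, ?_, ?_, ?_, ?_, ?_⟩ <;>
        simp [Matrix.vecHead, Matrix.vecTail] <;>
        (first | exact hc | exact hd | exact hef | exact mul_eq_zero.mp hc | exact mul_eq_zero.mp hd | ring)
  · intro hl hm
    rw [dim1 lam mu hl hm]; norm_num
  · rintro (⟨hl, rfl⟩ | ⟨rfl, hm⟩)
    · rw [dim2 lam hl]; norm_num
    · rw [dim3 mu hm]; norm_num
  · rintro rfl rfl
    rw [dim4]; norm_num

end
end
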